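/- If a channel E on a finite-dimensional system has a repeatable implementation with finite memory (in the sense that some unitary memory model induces E on every use for all input sequences), then E is unital: E(I) = I. -/

import Mathlib

open Matrix Kronecker BigOperators
open scoped ComplexOrder

noncomputable def vnEntropy {n : Type*} [Fintype n] [DecidableEq n] (ρ : Matrix n n ℂ) : ℝ :=
  if h : ρ.IsHermitian then ∑ i, Real.negMulLog (h.eigenvalues i) else 0

def IsDensity {n : Type*} [Fintype n] [DecidableEq n] (ρ : Matrix n n ℂ) : Prop :=
  ρ.PosSemidef ∧ ρ.trace = 1

def IsUnitary {n : Type*} [Fintype n] [DecidableEq n] (U : Matrix n n ℂ) : Prop :=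
  U * Uᴴ = 1 ∧ Uᴴ * U = 1

noncomputable def ptraceMem {μ s : Type*} [Fintype μ] (X : Matrix (μ × s) (μ × s) ℂ) : Matrix s s ℂ :=
  Matrix.of fun i j => ∑ a, X (a, i) (a, j)

noncomputable def ptraceSys {μ s : Type*} [Fintype s] (X : Matrix (μ × s) (μ × s) ℂ) : Matrix μ μ ℂ :=
  Matrix.of fun a b => ∑ i, X (a, i) (b, i)

noncomputable def inducedChan {μ s : Type*} [Fintype μ] [Fintype s]
    (U : Matrix (μ × s) (μ × s) ℂ) (ξ : Matrix μ μ ℂ) (ρ : Matrix s s ℂ) : Matrix s s ℂ :=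
  ptraceMem (U * (ξ ⊗ₖ ρ) * Uᴴ)

noncomputable def memUpdate {μ s : Type*} [Fintype μ] [Fintype s]
    (U : Matrix (μ × s) (μ × s) ℂ) (ξ : Matrix μ μ ℂ) (ρ : Matrix s s ℂ) : Matrix μ μ ℂ :=
  ptraceSys (U * (ξ ⊗ₖ ρ) * Uᴴ)

def ctrlU {μ s : Type*} [DecidableEq μ] (Uf : μ → Matrix s s ℂ) : Matrix (μ × s) (μ × s) ℂ :=
  Matrix.of fun p q => if p.1 = q.1 then Uf p.1 p.2 q.2 else 0

def extendMap {n m : Type*} [Fintype n] [DecidableEq n]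
    (E : Matrix n n ℂ →ₗ[ℂ] Matrix n n ℂ) (ρ : Matrix (n × m) (n × m) ℂ) :
    Matrix (n × m) (n × m) ℂ :=
  Matrix.of fun p q => E (Matrix.of fun i j => ρ (i, p.2) (j, q.2)) p.1 q.1

def IsCP {n : Type*} [Fintype n] [DecidableEq n]
    (E : Matrix n n ℂ →ₗ[ℂ] Matrix n n ℂ) : Prop :=
  ∀ (k : ℕ) (ρ : Matrix (n × Fin k) (n × Fin k) ℂ), ρ.PosSemidef → (extendMap E ρ).PosSemidef

def IsTP {n : Type*} [Fintype n] [DecidableEq n]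
    (E : Matrix n n ℂ →ₗ[ℂ] Matrix n n ℂ) : Prop :=
  ∀ ρ, (E ρ).trace = ρ.trace

noncomputable def mlog {n : Type*} [Fintype n] [DecidableEq n] (ρ : Matrix n n ℂ) :
    Matrix n n ℂ :=
  if h : ρ.IsHermitian then
    (h.eigenvectorUnitary : Matrix n n ℂ) *
      Matrix.diagonal (fun i => (Real.log (h.eigenvalues i) : ℂ)) *
      (h.eigenvectorUnitary : Matrix n n ℂ)ᴴ
  else 0

noncomputable def relEntropy {n : Type*} [Fintype n] [DecidableEq n]
    (ρ ω : Matrix n n ℂ) : ℝ :=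
  ((ρ * (mlog ρ - mlog ω)).trace).re

structure RepeatableImpl {s : Type*} [Fintype s] [DecidableEq s]
    (E : Matrix s s ℂ → Matrix s s ℂ) where
  μ : Type
  [finμ : Fintype μ]
  [decμ : DecidableEq μ]
  U : Matrix (μ × s) (μ × s) ℂ
  ξ : Matrix μ μ ℂ
  unitary : IsUnitary U
  density : IsDensity ξ
  repeats : ∀ (ρs : ℕ → Matrix s s ℂ), (∀ k, IsDensity (ρs k)) →
    ∀ (ξseq : ℕ → Matrix μ μ ℂ), ξseq 0 = ξ →
      (∀ k, ξseq (k + 1) = memUpdate U (ξseq k) (ρs k)) →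
      ∀ n (ρ : Matrix s s ℂ), IsDensity ρ → inducedChan U (ξseq n) ρ = E ρ

/-!
Feed the maximally mixed state `ρ₀ = I/d` at every use and follow the squared Hilbert–Schmidt
norm `p k = ‖ξ k‖₂²` of the memory. For `σ = U (ξ k ⊗ ρ₀) U†` unitary invariance gives
`‖σ‖₂² = p k / d`, and `Tr_S σ = ξ (k+1)`, so Pythagoras gives
`‖σ - ξ (k+1) ⊗ ρ₀‖₂² = (p k - p (k+1)) / d`. Tracing out the memory turns
`σ - ξ (k+1) ⊗ ρ₀` into `E ρ₀ - ρ₀` at the cost of a factor `|M|`, hence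
`d ‖E ρ₀ - ρ₀‖₂² ≤ |M| (p k - p (k+1))` for every `k`. As `p ≥ 0` cannot decrease by a fixed
positive amount forever, `E ρ₀ = ρ₀`, and `E I = I` by linearity. This is the Hilbert–Schmidt
analogue of the entropy bound `n (S ρ - S (E ρ)) ≤ log dim H_M`.
-/

lemma nonpos_of_forall_le_sub_succ {p : ℕ → ℝ} {c : ℝ} (hp : ∀ n, 0 ≤ p n)
    (h : ∀ k, c ≤ p k - p (k + 1)) : c ≤ 0 := by
  have hsum (n : ℕ) : n * c ≤ p 0 := by
    have := Finset.sum_le_sum fun k (_ : k ∈ Finset.range n) => h k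
    rw [Finset.sum_const, Finset.card_range, nsmul_eq_mul, Finset.sum_range_sub' p] at this
    linarith [hp n]
  by_contra! hc
  obtain ⟨n, hn⟩ := exists_nat_gt (p 0 / c)
  linarith [hsum n, (div_lt_iff₀ hc).1 hn]

lemma Complex.normSq_sum_le_card_mul {ι : Type*} [Fintype ι] (f : ι → ℂ) :
    Complex.normSq (∑ i, f i) ≤ Fintype.card ι * ∑ i, Complex.normSq (f i) := by
  simp only [← Complex.sq_norm]
  calc ‖∑ i, f i‖ ^ 2 ≤ (∑ i, ‖f i‖) ^ 2 := by gcongr; exact norm_sum_le _ _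
    _ ≤ _ := by simpa using sq_sum_le_card_mul_sum_sq (s := Finset.univ) (f := fun i => ‖f i‖)

namespace Matrix

noncomputable def hsNormSq {m n : Type*} [Fintype m] [Fintype n] (X : Matrix m n ℂ) : ℝ :=
  ∑ i, ∑ j, Complex.normSq (X i j)

section HSNorm

variable {m n : Type*} [Fintype m] [Fintype n]

lemma hsNormSq_nonneg (X : Matrix m n ℂ) : 0 ≤ hsNormSq X :=
  Finset.sum_nonneg fun _ _ => Finset.sum_nonneg fun _ _ => Complex.normSq_nonneg _

lemma ofReal_hsNormSq (X : Matrix m n ℂ) : (hsNormSq X : ℂ) = (Xᴴ * X).trace := by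
  simp only [hsNormSq, trace, diag_apply, mul_apply, conjTranspose_apply, Complex.ofReal_sum,
    Complex.normSq_eq_conj_mul_self, Complex.star_def]
  exact Finset.sum_comm

lemma hsNormSq_sub (X Y : Matrix m n ℂ) :
    hsNormSq (X - Y) = hsNormSq X + hsNormSq Y - 2 * ((Yᴴ * X).trace).re := by
  simp only [hsNormSq, sub_apply, Complex.normSq_sub, trace, diag_apply, mul_apply,
    conjTranspose_apply, Complex.re_sum, Finset.sum_sub_distrib, Finset.sum_add_distrib,
    Finset.mul_sum]
  rw [Finset.sum_comm (γ := n)]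
  congr 1
  refine Finset.sum_congr rfl fun i _ => Finset.sum_congr rfl fun j _ => ?_
  rw [mul_comm (star _)]
  rfl

lemma hsNormSq_smul (c : ℂ) (X : Matrix m n ℂ) :
    hsNormSq (c • X) = Complex.normSq c * hsNormSq X := by
  simp [hsNormSq, Complex.normSq_mul, Finset.mul_sum]

lemma hsNormSq_kronecker {m' n' : Type*} [Fintype m'] [Fintype n'] (A : Matrix m n ℂ)
    (B : Matrix m' n' ℂ) : hsNormSq (A ⊗ₖ B) = hsNormSq A * hsNormSq B := by
  simp only [hsNormSq, kroneckerMap_apply, Complex.normSq_mul, Fintype.sum_prod_type,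
    Finset.sum_mul_sum]

lemma hsNormSq_one [DecidableEq n] : hsNormSq (1 : Matrix n n ℂ) = Fintype.card n := by
  simp [hsNormSq, one_apply, apply_ite Complex.normSq]

lemma hsNormSq_eq_zero {X : Matrix m n ℂ} : hsNormSq X = 0 ↔ X = 0 := by
  rw [← Complex.ofReal_inj, Complex.ofReal_zero, ofReal_hsNormSq,
    trace_conjTranspose_mul_self_eq_zero_iff]

lemma hsNormSq_unitary_conj [DecidableEq n] {U : Matrix n n ℂ} (hU : Uᴴ * U = 1)
    (X : Matrix n n ℂ) :
    hsNormSq (U * X * Uᴴ) = hsNormSq X := by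
  apply Complex.ofReal_injective
  rw [ofReal_hsNormSq, ofReal_hsNormSq, conjTranspose_mul, conjTranspose_mul,
    conjTranspose_conjTranspose]
  simp only [Matrix.mul_assoc]
  rw [← Matrix.mul_assoc Uᴴ U, hU, Matrix.one_mul, trace_mul_comm]
  simp only [Matrix.mul_assoc, hU, Matrix.mul_one]

end HSNorm

section PartialTrace

variable {μ s : Type*} [Fintype μ]

lemma trace_ptraceSys [Fintype s] (X : Matrix (μ × s) (μ × s) ℂ) :
    (ptraceSys X).trace = X.trace := by
  simp [ptraceSys, trace, Fintype.sum_prod_type]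

lemma ptraceMem_sub (X Y : Matrix (μ × s) (μ × s) ℂ) :
    ptraceMem (X - Y) = ptraceMem X - ptraceMem Y := by
  ext i j
  simp [ptraceMem, Finset.sum_sub_distrib]

lemma ptraceMem_kronecker (A : Matrix μ μ ℂ) (B : Matrix s s ℂ) :
    ptraceMem (A ⊗ₖ B) = A.trace • B := by
  ext i j
  simp [ptraceMem, trace, Finset.sum_mul]

lemma trace_mul_kronecker_one [Fintype s] [DecidableEq s] (X : Matrix (μ × s) (μ × s) ℂ)
    (A : Matrix μ μ ℂ) :
    (X * (A ⊗ₖ (1 : Matrix s s ℂ))).trace = (ptraceSys X * A).trace := by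
  simp only [trace, diag_apply, mul_apply, ptraceSys, of_apply, Fintype.sum_prod_type,
    kroneckerMap_apply, one_apply, mul_ite, mul_one, mul_zero, Finset.sum_ite_eq',
    Finset.mem_univ, if_true, Finset.sum_mul]
  exact Finset.sum_congr rfl fun _ _ => Finset.sum_comm

lemma hsNormSq_ptraceMem_le [Fintype s] (X : Matrix (μ × s) (μ × s) ℂ) :
    hsNormSq (ptraceMem X) ≤ Fintype.card μ * hsNormSq X := by
  have hdiag : ∑ i, ∑ j, ∑ a, Complex.normSq (X (a, i) (a, j)) ≤ hsNormSq X :=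
    calc ∑ i, ∑ j, ∑ a, Complex.normSq (X (a, i) (a, j))
        = ∑ a, ∑ i, ∑ j, Complex.normSq (X (a, i) (a, j)) :=
          (Finset.sum_congr rfl fun _ _ => Finset.sum_comm).trans Finset.sum_comm
      _ ≤ ∑ a, ∑ i, ∑ b, ∑ j, Complex.normSq (X (a, i) (b, j)) := by
          gcongr with a _ i _
          exact Finset.single_le_sum (f := fun b => ∑ j, Complex.normSq (X (a, i) (b, j)))
            (fun _ _ => Finset.sum_nonneg fun _ _ => Complex.normSq_nonneg _) (Finset.mem_univ a)
      _ = hsNormSq X := by simp only [hsNormSq, Fintype.sum_prod_type]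
  calc hsNormSq (ptraceMem X)
      ≤ ∑ i, ∑ j, Fintype.card μ * ∑ a, Complex.normSq (X (a, i) (a, j)) :=
        Finset.sum_le_sum fun i _ => Finset.sum_le_sum fun j _ =>
          Complex.normSq_sum_le_card_mul _
    _ ≤ Fintype.card μ * hsNormSq X := by
        simp only [← Finset.mul_sum]
        gcongr

end PartialTrace

section MaxMixed

variable (s : Type*) [Fintype s] [DecidableEq s]

noncomputable def maxMixed : Matrix s s ℂ := (Fintype.card s : ℂ)⁻¹ • 1

lemma conjTranspose_maxMixed : (maxMixed s)ᴴ = maxMixed s := by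
  simp [maxMixed, conjTranspose_smul]

lemma hsNormSq_maxMixed : hsNormSq (maxMixed s) = (Fintype.card s : ℝ)⁻¹ := by
  rw [maxMixed, hsNormSq_smul, hsNormSq_one, Complex.normSq_inv, Complex.normSq_natCast,
    inv_mul_eq_div, div_self_mul_self']

lemma trace_maxMixed [Nonempty s] : (maxMixed s).trace = 1 := by
  simp [maxMixed]

lemma isDensity_maxMixed [Nonempty s] : IsDensity (maxMixed s) :=
  ⟨PosSemidef.one.smul (by simp), trace_maxMixed s⟩

end MaxMixed

/-- Pythagoras: `ptraceSys X ⊗ₖ maxMixed s` is the orthogonal projection of `X` onto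
`Matrix μ μ ℂ ⊗ I`. -/
lemma hsNormSq_sub_ptraceSys_kronecker_maxMixed {μ s : Type*} [Fintype μ] [Fintype s]
    [DecidableEq s] (X : Matrix (μ × s) (μ × s) ℂ) :
    hsNormSq (X - ptraceSys X ⊗ₖ maxMixed s) =
      hsNormSq X - hsNormSq (ptraceSys X) / Fintype.card s := by
  set A := ptraceSys X
  have hinner : ((A ⊗ₖ maxMixed s)ᴴ * X).trace = (hsNormSq A / Fintype.card s : ℝ) := by
    rw [conjTranspose_kronecker, conjTranspose_maxMixed, maxMixed, kronecker_smul, smul_mul,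
      trace_smul, trace_mul_comm, trace_mul_kronecker_one, trace_mul_comm,
      ← ofReal_hsNormSq, smul_eq_mul]
    push_cast
    ring
  rw [hsNormSq_sub, hsNormSq_kronecker, hsNormSq_maxMixed, hinner, Complex.ofReal_re]
  ring

section MemoryModel

variable {μ s : Type*} [Fintype μ] [Fintype s] [DecidableEq μ] [DecidableEq s]

lemma trace_memUpdate {U : Matrix (μ × s) (μ × s) ℂ} (hU : Uᴴ * U = 1) (ξ : Matrix μ μ ℂ)
    (ρ : Matrix s s ℂ) : (memUpdate U ξ ρ).trace = ξ.trace * ρ.trace := by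
  rw [memUpdate, trace_ptraceSys, trace_mul_cycle, hU, Matrix.one_mul, trace_kronecker]

lemma card_mul_hsNormSq_inducedChan_maxMixed_sub_le [Nonempty s]
    {U : Matrix (μ × s) (μ × s) ℂ} (hU : Uᴴ * U = 1) {ξ : Matrix μ μ ℂ} (hξ : ξ.trace = 1) :
    Fintype.card s * hsNormSq (inducedChan U ξ (maxMixed s) - maxMixed s) ≤
      Fintype.card μ * (hsNormSq ξ - hsNormSq (memUpdate U ξ (maxMixed s))) := by
  set ρ := maxMixed s
  set σ := U * (ξ ⊗ₖ ρ) * Uᴴ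
  have hσ : (ptraceSys σ).trace = 1 := by
    rw [← memUpdate, trace_memUpdate hU, hξ, trace_maxMixed, mul_one]
  have hchan : inducedChan U ξ ρ - ρ = ptraceMem (σ - ptraceSys σ ⊗ₖ ρ) := by
    rw [ptraceMem_sub, ptraceMem_kronecker, hσ, one_smul, inducedChan]
  have hpyth : hsNormSq (σ - ptraceSys σ ⊗ₖ ρ) =
      (hsNormSq ξ - hsNormSq (ptraceSys σ)) / Fintype.card s := by
    rw [hsNormSq_sub_ptraceSys_kronecker_maxMixed σ, hsNormSq_unitary_conj hU,
      hsNormSq_kronecker, hsNormSq_maxMixed]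
    ring
  have hd : (Fintype.card s : ℝ) ≠ 0 := Nat.cast_ne_zero.2 Fintype.card_ne_zero
  calc Fintype.card s * hsNormSq (inducedChan U ξ ρ - ρ)
      ≤ Fintype.card s * (Fintype.card μ * hsNormSq (σ - ptraceSys σ ⊗ₖ ρ)) := by
        rw [hchan]
        gcongr
        exact hsNormSq_ptraceMem_le _
    _ = Fintype.card μ * (hsNormSq ξ - hsNormSq (ptraceSys σ)) := by
        rw [hpyth]
        field_simp

end MemoryModel

end Matrix

attribute [instance] RepeatableImpl.finμ RepeatableImpl.decμ

theorem RepeatableImpl.apply_maxMixed {s : Type*} [Fintype s] [DecidableEq s] [Nonempty s]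
    {E : Matrix s s ℂ → Matrix s s ℂ} (impl : RepeatableImpl E) :
    E (maxMixed s) = maxMixed s := by
  set ρ := maxMixed s
  let ξ : ℕ → Matrix impl.μ impl.μ ℂ := fun n => (memUpdate impl.U · ρ)^[n] impl.ξ
  have hsucc (k : ℕ) : ξ (k + 1) = memUpdate impl.U (ξ k) ρ :=
    Function.iterate_succ_apply' _ _ _
  have hchan (k : ℕ) : inducedChan impl.U (ξ k) ρ = E ρ :=
    impl.repeats (fun _ => ρ) (fun _ => isDensity_maxMixed s) ξ rfl hsucc k ρ
      (isDensity_maxMixed s)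
  have htrace (k : ℕ) : (ξ k).trace = 1 := by
    induction k with
    | zero => exact impl.density.2
    | succ k ih => rw [hsucc, trace_memUpdate impl.unitary.2, ih, trace_maxMixed, mul_one]
  have hstep (k : ℕ) : Fintype.card s * hsNormSq (E ρ - ρ) ≤
      Fintype.card impl.μ * hsNormSq (ξ k) - Fintype.card impl.μ * hsNormSq (ξ (k + 1)) := by
    rw [← hchan k, hsucc, ← mul_sub]
    exact card_mul_hsNormSq_inducedChan_maxMixed_sub_le impl.unitary.2 (htrace k)
  have hnonpos : Fintype.card s * hsNormSq (E ρ - ρ) ≤ 0 :=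
    nonpos_of_forall_le_sub_succ (fun _ => mul_nonneg (Nat.cast_nonneg _) (hsNormSq_nonneg _))
      hstep
  have hzero : hsNormSq (E ρ - ρ) = 0 :=
    le_antisymm (nonpos_of_mul_nonpos_right hnonpos (by positivity)) (hsNormSq_nonneg _)
  exact sub_eq_zero.1 (hsNormSq_eq_zero.1 hzero)

theorem repeatable_implies_unital_general
    {s : Type*} [Fintype s] [DecidableEq s] [Nonempty s]
    (E : Matrix s s ℂ →ₗ[ℂ] Matrix s s ℂ)
    (hrep : Nonempty (RepeatableImpl (fun ρ => E ρ))) :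
    E 1 = 1 := by
  obtain ⟨impl⟩ := hrep
  have hone : (1 : Matrix s s ℂ) = (Fintype.card s : ℂ) • maxMixed s := by
    simp [maxMixed, smul_smul]
  rw [hone, map_smul, impl.apply_maxMixed]

theorem repeatable_implies_unital
    {s : Type*} [Fintype s] [DecidableEq s] [Nonempty s]
    (E : Matrix s s ℂ →ₗ[ℂ] Matrix s s ℂ)
    (hCP : IsCP E) (hTP : IsTP E)
    (hrep : Nonempty (RepeatableImpl (fun ρ => E ρ))) :
    E 1 = 1 :=
  repeatable_implies_unital_general E hrep
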